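/- arXiv:1611.04623 — 3 statements merged into one kernel-verified Lean document; each statement's English description precedes it below -/
import Mathlib

section
/- A metric space X has the coarse Stone property (every uniformly bounded cover refines a point-finite uniformly bounded cover) if and only if Δ_X^{(c)}(R) < ∞ for all R ∈ [0,∞), where Δ_X^{(c)}(R) = inf{diam(𝒰) : 𝒰 is a point-finite cover of X with ℒ(𝒰) ≥ R}. -/
open ENNReal NNReal Set Filter ZeroAtInfty

/-- `U` is a cover of the space. -/
def IsCover {X : Type*} (U : Set (Set X)) : Prop := ⋃₀ U = Set.univ

/-- `U` is point-finite: every point lies in only finitely many members. -/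
def PointFinite {X : Type*} (U : Set (Set X)) : Prop :=
  ∀ x : X, {V | V ∈ U ∧ x ∈ V}.Finite

/-- The Lebesgue number of a family of sets. -/
noncomputable def Leb {X : Type*} [PseudoMetricSpace X] (U : Set (Set X)) : ℝ≥0∞ :=
  sSup {d : ℝ≥0∞ | ∀ E : Set X, EMetric.diam E < d → ∃ V ∈ U, E ⊆ V}

/-- The diameter of a family of sets: the sup of the diameters of its members. -/
noncomputable def covDiam {X : Type*} [PseudoMetricSpace X] (U : Set (Set X)) : ℝ≥0∞ :=
  ⨆ V ∈ U, EMetric.diam V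

/-- The modulus `Δ_X^{(c)}`. -/
noncomputable def Δc (X : Type*) [PseudoMetricSpace X] (R : ℝ≥0∞) : ℝ≥0∞ :=
  ⨅ U ∈ {U : Set (Set X) | IsCover U ∧ PointFinite U ∧ R ≤ Leb U}, covDiam U

/-- The modulus `Δ_X^{(u)}`. -/
noncomputable def Δu (X : Type*) [PseudoMetricSpace X] (r : ℝ≥0∞) : ℝ≥0∞ :=
  ⨆ U ∈ {U : Set (Set X) | IsCover U ∧ PointFinite U ∧ covDiam U ≤ r}, Leb U

/-- The density character: the least cardinality of a dense subset. -/
noncomputable def densChar (X : Type*) [TopologicalSpace X] : Cardinal :=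
  sInf {c : Cardinal | ∃ s : Set X, Dense s ∧ Cardinal.mk s = c}

/-- The modulus of continuity (expansion) of a map. -/
noncomputable def omegaMod {X Y : Type*} [PseudoMetricSpace X] [PseudoMetricSpace Y]
    (f : X → Y) (t : ℝ) : ℝ≥0∞ :=
  ⨆ p ∈ {p : X × X | dist p.1 p.2 ≤ t}, edist (f p.1) (f p.2)

/-- The modulus of compression of a map. -/
noncomputable def rhoMod {X Y : Type*} [PseudoMetricSpace X] [PseudoMetricSpace Y]
    (f : X → Y) (t : ℝ) : ℝ≥0∞ :=
  ⨅ p ∈ {p : X × X | t ≤ dist p.1 p.2}, edist (f p.1) (f p.2)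

/-!
Given the coarse Stone property, refine the cover by all sets of diameter at most `R`: the
refinement has Lebesgue number at least `R`. Conversely, a point-finite uniformly bounded cover
whose Lebesgue number exceeds `diam 𝒰` absorbs every member of `𝒰`.
-/

section Covers

variable {X : Type*} [PseudoMetricSpace X]

theorem exists_mem_superset_of_ediam_lt_leb {U : Set (Set X)} {E : Set X}
    (hE : Metric.ediam E < Leb U) : ∃ V ∈ U, E ⊆ V := by
  obtain ⟨d, hd, hEd⟩ := lt_sSup_iff.mp hE
  exact hd E hEd

theorem ediam_le_covDiam {U : Set (Set X)} {V : Set X} (hV : V ∈ U) :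
    Metric.ediam V ≤ covDiam U :=
  le_biSup _ hV

theorem isCover_setOf_ediam_le (R : ℝ≥0∞) : IsCover {E : Set X | Metric.ediam E ≤ R} :=
  eq_univ_of_forall fun x => ⟨{x}, by simp, rfl⟩

theorem covDiam_setOf_ediam_le_le (R : ℝ≥0∞) : covDiam {E : Set X | Metric.ediam E ≤ R} ≤ R :=
  iSup₂_le fun _ hE => hE

theorem Δc_lt_top_iff {R : ℝ≥0∞} : Δc X R < ⊤ ↔
    ∃ V : Set (Set X), IsCover V ∧ PointFinite V ∧ R ≤ Leb V ∧ covDiam V < ⊤ := by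
  simp only [Δc, iInf_lt_iff, mem_ofPred_eq, exists_prop, and_assoc]

theorem Δc_lt_top_of_refines {R : ℝ≥0}
    (h : ∀ U : Set (Set X), IsCover U → covDiam U < ⊤ →
      ∃ V : Set (Set X), IsCover V ∧ PointFinite V ∧ covDiam V < ⊤ ∧
        ∀ W ∈ U, ∃ W' ∈ V, W ⊆ W') :
    Δc X R < ⊤ := by
  obtain ⟨V, hVcov, hVpf, hVbd, hVref⟩ := h {E | Metric.ediam E ≤ R}
    (isCover_setOf_ediam_le _) ((covDiam_setOf_ediam_le_le _).trans_lt coe_lt_top)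
  exact Δc_lt_top_iff.mpr
    ⟨V, hVcov, hVpf, le_sSup fun E hE => hVref E hE.le, hVbd⟩

theorem exists_refinement_of_Δc_lt_top (h : ∀ R : ℝ≥0, Δc X R < ⊤)
    {U : Set (Set X)} (hUbd : covDiam U < ⊤) :
    ∃ V : Set (Set X), IsCover V ∧ PointFinite V ∧ covDiam V < ⊤ ∧
      ∀ W ∈ U, ∃ W' ∈ V, W ⊆ W' := by
  obtain ⟨R, hUR, -⟩ := ENNReal.lt_iff_exists_nnreal_btwn.mp hUbd
  obtain ⟨V, hVcov, hVpf, hRV, hVbd⟩ := Δc_lt_top_iff.mp (h R)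
  refine ⟨V, hVcov, hVpf, hVbd, fun W hW => exists_mem_superset_of_ediam_lt_leb ?_⟩
  exact ((ediam_le_covDiam hW).trans_lt hUR).trans_le hRV

end Covers

theorem stmt3 {X : Type*} [MetricSpace X] :
    (∀ U : Set (Set X), IsCover U → covDiam U < ⊤ →
      ∃ V : Set (Set X), IsCover V ∧ PointFinite V ∧ covDiam V < ⊤ ∧
        ∀ W ∈ U, ∃ W' ∈ V, W ⊆ W') ↔
    (∀ R : ℝ≥0, Δc X R < ⊤) :=
  ⟨fun h _ => Δc_lt_top_of_refines h,
    fun h _ _ hUbd => exists_refinement_of_Δc_lt_top h hUbd⟩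
end

section
/- Let X and Y be metric spaces where Y has the uniform Stone property. If there exists a uniform embedding f : X → Y, then X has the uniform Stone property. -/
open ENNReal NNReal Set Filter ZeroAtInfty

/-!
Pull back a point-finite cover `V` of `Y` with small diameter and positive Lebesgue number along
`f`. Preimages preserve covering and point-finiteness. If `covDiam V` lies below the compression
modulus `ρ_f(r)`, points with images in a common member of `V` are `r`-close, so the pulled-back
cover has diameter at most `r`; and since `ω_f(t) → 0`, a set of diameter below a small `t` has
image of diameter below the Lebesgue number of `V`, so the pulled-back cover has Lebesgue
number at least `t`.
-/

open Metric

section Covers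

variable {X : Type*}

lemma Leb_pos_iff [PseudoMetricSpace X] {U : Set (Set X)} :
    0 < Leb U ↔ ∃ d > 0, ∀ E : Set X, ediam E < d → ∃ V ∈ U, E ⊆ V := by
  rw [Leb, lt_sSup_iff]
  exact ⟨fun ⟨d, hd, hd0⟩ => ⟨d, hd0, hd⟩, fun ⟨d, hd0, hd⟩ => ⟨d, hd, hd0⟩⟩

lemma Δu_pos_iff [PseudoMetricSpace X] {r : ℝ≥0∞} :
    0 < Δu X r ↔ ∃ U : Set (Set X), (IsCover U ∧ PointFinite U ∧ covDiam U ≤ r) ∧ 0 < Leb U :=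
  lt_biSup_iff

variable {Y : Type*} {V : Set (Set Y)}

lemma IsCover.preimage (hV : IsCover V) (f : X → Y) : IsCover (Set.preimage f '' V) := by
  refine Set.eq_univ_of_forall fun x => ?_
  obtain ⟨W, hW, hxW⟩ := Set.mem_sUnion.1 (hV ▸ Set.mem_univ (f x))
  exact ⟨f ⁻¹' W, ⟨W, hW, rfl⟩, hxW⟩

lemma PointFinite.preimage (hV : PointFinite V) (f : X → Y) :
    PointFinite (Set.preimage f '' V) := by
  intro x
  refine ((hV (f x)).image (Set.preimage f)).subset ?_
  rintro _ ⟨⟨W, hW, rfl⟩, hxW⟩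
  exact ⟨W, ⟨hW, hxW⟩, rfl⟩

end Covers

section Moduli

variable {X Y : Type*} [PseudoMetricSpace X] [PseudoMetricSpace Y] (f : X → Y)

lemma edist_le_omegaMod {x y : X} {t : ℝ} (h : dist x y ≤ t) :
    edist (f x) (f y) ≤ omegaMod f t :=
  le_iSup₂ (f := fun (p : X × X) (_ : dist p.1 p.2 ≤ t) => edist (f p.1) (f p.2)) (x, y) h

lemma rhoMod_le_edist {x y : X} {t : ℝ} (h : t ≤ dist x y) :
    rhoMod f t ≤ edist (f x) (f y) :=
  iInf₂_le (f := fun (p : X × X) (_ : t ≤ dist p.1 p.2) => edist (f p.1) (f p.2)) (x, y) h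

lemma dist_lt_of_edist_lt_rhoMod {x y : X} {t : ℝ} (h : edist (f x) (f y) < rhoMod f t) :
    dist x y < t :=
  not_le.1 fun hle => (rhoMod_le_edist f hle).not_gt h

lemma ediam_image_le_omegaMod {E : Set X} {t : ℝ} (ht : 0 ≤ t)
    (hE : ediam E ≤ ENNReal.ofReal t) : ediam (f '' E) ≤ omegaMod f t := by
  refine ediam_le ?_
  rintro _ ⟨x, hx, rfl⟩ _ ⟨y, hy, rfl⟩
  refine edist_le_omegaMod f ?_
  rw [← ENNReal.ofReal_le_ofReal_iff ht, ← edist_dist]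
  exact (edist_le_ediam_of_mem hx hy).trans hE

lemma ediam_preimage_le_of_lt_rhoMod {W : Set Y} {t : ℝ} (hW : ediam W < rhoMod f t) :
    ediam (f ⁻¹' W) ≤ ENNReal.ofReal t := by
  refine ediam_le fun x hx y hy => ?_
  rw [edist_dist]
  exact ENNReal.ofReal_le_ofReal
    (dist_lt_of_edist_lt_rhoMod f ((edist_le_ediam_of_mem (s := W) hx hy).trans_lt hW)).le

lemma covDiam_preimage_le_of_lt_rhoMod {V : Set (Set Y)} {t : ℝ} (hV : covDiam V < rhoMod f t) :
    covDiam (Set.preimage f '' V) ≤ ENNReal.ofReal t := by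
  refine iSup₂_le ?_
  rintro _ ⟨W, hW, rfl⟩
  exact ediam_preimage_le_of_lt_rhoMod f
    ((le_iSup₂ (f := fun (W : Set Y) (_ : W ∈ V) => ediam W) W hW).trans_lt hV)

lemma Leb_preimage_pos (homega : Tendsto (omegaMod f) (nhdsWithin 0 (Set.Ioi 0)) (nhds 0))
    {V : Set (Set Y)} (hV : 0 < Leb V) : 0 < Leb (Set.preimage f '' V) := by
  obtain ⟨d, hd0, hd⟩ := Leb_pos_iff.1 hV
  obtain ⟨t, htd, ht0⟩ : ∃ t : ℝ, omegaMod f t < d ∧ 0 < t :=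
    ((homega.eventually (gt_mem_nhds hd0)).and self_mem_nhdsWithin).exists
  refine Leb_pos_iff.2 ⟨ENNReal.ofReal t, ENNReal.ofReal_pos.2 ht0, fun E hE => ?_⟩
  obtain ⟨W, hW, hEW⟩ := hd (f '' E) ((ediam_image_le_omegaMod f ht0.le hE.le).trans_lt htd)
  exact ⟨f ⁻¹' W, ⟨W, hW, rfl⟩, Set.image_subset_iff.1 hEW⟩

end Moduli

theorem stmt12 {X Y : Type*} [MetricSpace X] [MetricSpace Y]
    (hY : ∀ r : ℝ≥0, 0 < r → 0 < Δu Y r) (f : X → Y)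
    (homega : Tendsto (omegaMod f) (nhdsWithin (0 : ℝ) (Set.Ioi 0)) (nhds 0))
    (hrho : ∀ t : ℝ, 0 < t → 0 < rhoMod f t) :
    ∀ r : ℝ≥0, 0 < r → 0 < Δu X r := by
  intro r hr
  obtain ⟨c, hc0, hcρ⟩ := ENNReal.lt_iff_exists_nnreal_btwn.1 (hrho r (NNReal.coe_pos.2 hr))
  obtain ⟨V, ⟨hVcover, hVfinite, hVdiam⟩, hVLeb⟩ := Δu_pos_iff.1 (hY c (ENNReal.coe_pos.1 hc0))
  refine Δu_pos_iff.2 ⟨Set.preimage f '' V, ⟨hVcover.preimage f, hVfinite.preimage f, ?_⟩,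
    Leb_preimage_pos f homega hVLeb⟩
  simpa using covDiam_preimage_le_of_lt_rhoMod f (hVdiam.trans_lt hcρ)
end

section
/- Let X be a metric space with density character κ. If there exist C ≥ 1 and D ≥ 0 with Δ_X^{(c)}(R) ≤ CR + D for all R ∈ [0,∞), then for every λ > 0, every K > 2(C+λ), and every L > (C+λ)D/λ, there exists a map f : X → c₀⁺(κ) satisfying d_X(x,y) − L ≤ ‖f(x) − f(y)‖_∞ ≤ K·d_X(x,y) for all x, y ∈ X. If D = 0 one may take L = 0, giving a bi-Lipschitz embedding. -/
open ENNReal NNReal Set Filter ZeroAtInfty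

/-- `c₀(ι)`: real-valued functions on the discrete space `ι` vanishing at infinity,
with the sup-norm metric. -/
def c0Space (ι : Type*) : Type _ :=
  letI : TopologicalSpace ι := ⊥
  C₀(ι, ℝ)

noncomputable instance c0Space.metricSpace (ι : Type*) : MetricSpace (c0Space ι) :=
  letI : TopologicalSpace ι := ⊥
  (inferInstance : MetricSpace C₀(ι, ℝ))

instance c0Space.funLike (ι : Type*) : FunLike (c0Space ι) ι ℝ :=
  letI : TopologicalSpace ι := ⊥
  (inferInstance : FunLike C₀(ι, ℝ) ι ℝ)

/-- The positive cone `c₀⁺(ι)` with the inherited metric. -/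
abbrev c0Pos (ι : Type*) : Type _ := {g : c0Space ι // ∀ i, 0 ≤ g i}

universe u

/-!
At each scale `ρ ^ n` (`n : ℤ`) the growth bound on `Δc` yields a point-finite cover in which
every ball of radius `ρ ^ n` lies in a member and every member has diameter at most
`A ρ ^ n + D`, with `A` slightly above `2C`. A member `V` at scale `t` gives the `K`-Lipschitz
coordinate `K · min (min t (dist x Vᶜ)) (max 0 (dist x x₀ - c t))`; point-finiteness and the ramp
around the base point `x₀` make every image a `c₀` vector. Two points at distance `d > L` are
separated at the scale `t ≈ (d - L) / K`: the member swallowing the `t`-ball around the point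
farther from `x₀` has diameter `< d - L + D ≤ d`, so it misses the other point, and that coordinate
differs by `K t ≥ d - L`. Members meeting a dense set of size `κ` index the coordinates, at most
`κ` of them; a finite space embeds isometrically through its distance functions.
-/

open scoped Topology Cardinal
open Metric

namespace c0Space

variable {ι : Type*}

noncomputable def ofTendsto (g : ι → ℝ) (hg : Tendsto g cofinite (𝓝 0)) : c0Space ι :=
  letI : TopologicalSpace ι := ⊥
  haveI : DiscreteTopology ι := ⟨rfl⟩
  ⟨⟨g, continuous_of_discreteTopology⟩, by rwa [cocompact_eq_cofinite]⟩

@[simp]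
theorem ofTendsto_apply (g : ι → ℝ) (hg : Tendsto g cofinite (𝓝 0)) (i : ι) :
    ofTendsto g hg i = g i :=
  rfl

theorem dist_le_iff {f g : c0Space ι} {M : ℝ} (hM : 0 ≤ M) :
    dist f g ≤ M ↔ ∀ i, dist (f i) (g i) ≤ M :=
  letI : TopologicalSpace ι := ⊥
  BoundedContinuousFunction.dist_le (f := ZeroAtInftyContinuousMap.toBCF (f : C₀(ι, ℝ)))
    (g := ZeroAtInftyContinuousMap.toBCF (g : C₀(ι, ℝ))) hM

theorem dist_apply_le (f g : c0Space ι) (i : ι) : dist (f i) (g i) ≤ dist f g :=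
  letI : TopologicalSpace ι := ⊥
  BoundedContinuousFunction.dist_coe_le_dist (f := ZeroAtInftyContinuousMap.toBCF (f : C₀(ι, ℝ)))
    (g := ZeroAtInftyContinuousMap.toBCF (g : C₀(ι, ℝ))) i

end c0Space

theorem exists_map_c0Pos_of_coordinates {X J ι : Type*} [PseudoMetricSpace X] (e : J ↪ ι)
    (F : J → X → ℝ) (hF0 : ∀ j x, 0 ≤ F j x) (hFfin : ∀ x, ∀ ε > 0, {j | ε ≤ F j x}.Finite)
    {b : ℝ≥0} (hF : ∀ j, LipschitzWith b (F j)) :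
    ∃ f : X → c0Pos ι, (∀ x y, dist (f x) (f y) ≤ b * dist x y) ∧
      ∀ j x y, dist (F j x) (F j y) ≤ dist (f x) (f y) := by
  set g : X → ι → ℝ := fun x => Function.extend e (F · x) 0
  have hg_e : ∀ x j, g x (e j) = F j x := fun x j => e.injective.extend_apply _ _ _
  have hg_out : ∀ x i, (¬ ∃ j, e j = i) → g x i = 0 := fun x i hi =>
    Function.extend_apply' _ _ _ hi
  have hg0 : ∀ x i, 0 ≤ g x i := by
    intro x i
    by_cases hi : ∃ j, e j = i
    · obtain ⟨j, rfl⟩ := hi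
      exact (hg_e x j).symm ▸ hF0 j x
    · exact (hg_out x i hi).symm ▸ le_rfl
  have hg_tendsto : ∀ x, Tendsto (g x) cofinite (𝓝 0) := by
    refine fun x => Metric.tendsto_nhds.2 fun ε hε => eventually_cofinite.2 ?_
    refine ((hFfin x ε hε).image e).subset fun i hi => ?_
    rw [mem_ofPred_eq, Real.dist_0_eq_abs, abs_of_nonneg (hg0 x i), not_lt] at hi
    by_cases h : ∃ j, e j = i
    · obtain ⟨j, rfl⟩ := h
      exact ⟨j, by rwa [hg_e] at hi, rfl⟩
    · linarith [hg_out x i h]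
  refine ⟨fun x => ⟨c0Space.ofTendsto (g x) (hg_tendsto x), hg0 x⟩, fun x y => ?_, fun j x y => ?_⟩
  · refine (c0Space.dist_le_iff (by positivity)).2 fun i => ?_
    by_cases h : ∃ j, e j = i
    · obtain ⟨j, rfl⟩ := h
      simpa only [c0Space.ofTendsto_apply, hg_e] using (hF j).dist_le_mul x y
    · simp only [c0Space.ofTendsto_apply, hg_out _ i h, dist_self]
      positivity
  · have h := c0Space.dist_apply_le (c0Space.ofTendsto (g x) (hg_tendsto x))
      (c0Space.ofTendsto (g y) (hg_tendsto y)) (e j)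
    rwa [c0Space.ofTendsto_apply, c0Space.ofTendsto_apply, hg_e, hg_e] at h

theorem exists_map_c0Pos_dist_eq_of_finite {X ι : Type*} [PseudoMetricSpace X] [Finite X]
    (e : X ↪ ι) : ∃ f : X → c0Pos ι, ∀ x y, dist (f x) (f y) = dist x y := by
  obtain ⟨f, hle, hge⟩ := exists_map_c0Pos_of_coordinates e (fun z x => dist x z)
    (fun _ _ => dist_nonneg) (fun _ _ _ => Set.toFinite _) (fun z => LipschitzWith.dist_left z)
  refine ⟨f, fun x y => le_antisymm (by simpa using hle x y) ?_⟩
  simpa [Real.dist_eq, dist_comm] using hge x x y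

section Covers

variable {X : Type*} [PseudoMetricSpace X]

theorem exists_mem_superset_of_ediam_lt_Leb {U : Set (Set X)} {E : Set X}
    (hE : ediam E < Leb U) : ∃ V ∈ U, E ⊆ V := by
  obtain ⟨d, hd, hEd⟩ := lt_sSup_iff.1 hE
  exact hd E hEd

theorem edist_le_covDiam {U : Set (Set X)} {V : Set X} (hV : V ∈ U) {x y : X} (hx : x ∈ V)
    (hy : y ∈ V) : edist x y ≤ covDiam U :=
  (edist_le_ediam_of_mem hx hy).trans (le_iSup₂ (f := fun V (_ : V ∈ U) => ediam V) V hV)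

theorem exists_pointFinite_cover_of_Δc_le {C D : ℝ≥0}
    (h : ∀ R : ℝ≥0, Δc X R ≤ ((C * R + D : ℝ≥0) : ℝ≥0∞)) {A τ : ℝ} (hA : 2 * C < A) (hτ : 0 < τ) :
    ∃ U : Set (Set X), PointFinite U ∧ (∀ x, ∃ V ∈ U, closedBall x τ ⊆ V) ∧
      ∀ V ∈ U, ∀ y ∈ V, ∀ z ∈ V, dist y z ≤ A * τ + D := by
  -- a Lebesgue number `R = 2τ + η` slightly above `2τ` still has `C * R < A * τ`
  set η := (A - 2 * C) * τ / (C + 1)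
  have hgap : 0 < (A - 2 * C) * τ := mul_pos (sub_pos.2 hA) hτ
  have hη : 0 < η := div_pos hgap (by positivity)
  have hApos : 0 < A := (mul_nonneg zero_le_two C.coe_nonneg).trans_lt hA
  have hCη : C * η < (A - 2 * C) * τ := by
    rw [mul_div_assoc', div_lt_iff₀ (by positivity)]
    linarith
  set R : ℝ≥0 := ⟨2 * τ + η, by linarith⟩
  have hR : (R : ℝ) = 2 * τ + η := rfl
  have hΔ : Δc X R < ENNReal.ofReal (A * τ + D) := by
    refine (h R).trans_lt ?_
    rw [← ENNReal.ofReal_coe_nnreal, ENNReal.ofReal_lt_ofReal_iff (by positivity)]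
    push_cast
    rw [hR]
    linarith
  obtain ⟨U, ⟨-, hPF, hLeb⟩, hdiam⟩ : ∃ U ∈ {U : Set (Set X) | IsCover U ∧ PointFinite U ∧
      (R : ℝ≥0∞) ≤ Leb U}, covDiam U < ENNReal.ofReal (A * τ + D) := by
    simpa only [Δc, iInf_lt_iff, exists_prop] using hΔ
  refine ⟨U, hPF, fun x => exists_mem_superset_of_ediam_lt_Leb ?_,
    fun V hV y hy z hz => (edist_lt_ofReal.1 ((edist_le_covDiam hV hy hz).trans_lt hdiam)).le⟩
  calc ediam (closedBall x τ) ≤ 2 * ENNReal.ofReal τ := by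
        rw [← closedEBall_ofReal hτ.le]
        exact ediam_closedEBall_le
    _ = ENNReal.ofReal (2 * τ) := by rw [ENNReal.ofReal_mul zero_le_two, ENNReal.ofReal_ofNat]
    _ < R := by
        rw [← ENNReal.ofReal_coe_nnreal, ENNReal.ofReal_lt_ofReal_iff (by linarith), hR]
        linarith
    _ ≤ Leb U := hLeb

end Covers

theorem exists_dense_mk_eq_densChar (X : Type*) [TopologicalSpace X] :
    ∃ S : Set X, Dense S ∧ #S = densChar X :=
  csInf_mem (s := {c | ∃ S : Set X, Dense S ∧ #S = c}) ⟨#(univ : Set X), univ, dense_univ, rfl⟩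

section Depth

variable {X : Type*} [PseudoMetricSpace X]

/-- The cap at `t` keeps the distance to `Vᶜ` finite when `V = univ`. -/
noncomputable def depth (V : Set X) (t : ℝ) (x : X) : ℝ :=
  (min (ENNReal.ofReal t) (infEDist x Vᶜ)).toReal

theorem depth_nonneg (V : Set X) (t : ℝ) (x : X) : 0 ≤ depth V t x :=
  ENNReal.toReal_nonneg

theorem depth_le (V : Set X) {t : ℝ} (ht : 0 ≤ t) (x : X) : depth V t x ≤ t :=
  ENNReal.toReal_le_of_le_ofReal ht (min_le_left _ _)

theorem depth_eq_zero_of_notMem {V : Set X} (t : ℝ) {x : X} (hx : x ∉ V) : depth V t x = 0 := by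
  simp [depth, infEDist_zero_of_mem (mem_compl hx)]

theorem depth_eq_of_closedBall_subset {V : Set X} {t : ℝ} (ht : 0 ≤ t) {x : X}
    (hV : closedBall x t ⊆ V) : depth V t x = t := by
  have hfar : ENNReal.ofReal t ≤ infEDist x Vᶜ := by
    refine le_infEDist.2 fun z hz => ?_
    rw [edist_dist]
    refine ENNReal.ofReal_le_ofReal (le_of_lt ?_)
    by_contra! hzt
    exact hz (hV (mem_closedBall'.2 hzt))
  rw [depth, min_eq_left hfar, ENNReal.toReal_ofReal ht]

theorem lipschitzWith_depth (V : Set X) (t : ℝ) : LipschitzWith 1 (depth V t) := by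
  refine LipschitzWith.of_le_add fun x y => ?_
  rw [dist_edist]
  refine ENNReal.toReal_le_add ?_ (ne_top_of_le_ne_top ENNReal.ofReal_ne_top (min_le_left _ _))
    (edist_ne_top x y)
  calc min (ENNReal.ofReal t) (infEDist x Vᶜ)
      ≤ min (ENNReal.ofReal t + edist x y) (infEDist y Vᶜ + edist x y) :=
        min_le_min le_self_add infEDist_le_infEDist_add_edist
    _ = min (ENNReal.ofReal t) (infEDist y Vᶜ) + edist x y := min_add_add_right _ _ _

/-- The coordinate attached to a member `V` of the cover at scale `t`. The ramp vanishing on the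
ball of radius `c * t` about `x₀` leaves only finitely many scales active at each point. -/
noncomputable def rampedDepth (V : Set X) (t c : ℝ) (x₀ x : X) : ℝ :=
  min (depth V t x) (max 0 (dist x x₀ - c * t))

theorem rampedDepth_nonneg (V : Set X) (t c : ℝ) (x₀ x : X) : 0 ≤ rampedDepth V t c x₀ x :=
  le_min (depth_nonneg V t x) (le_max_left _ _)

theorem rampedDepth_le (V : Set X) {t : ℝ} (ht : 0 ≤ t) (c : ℝ) (x₀ x : X) :
    rampedDepth V t c x₀ x ≤ t :=
  (min_le_left _ _).trans (depth_le V ht x)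

theorem rampedDepth_eq_zero_of_notMem {V : Set X} (t c : ℝ) (x₀ : X) {x : X} (hx : x ∉ V) :
    rampedDepth V t c x₀ x = 0 := by
  rw [rampedDepth, depth_eq_zero_of_notMem t hx, min_eq_left (le_max_left _ _)]

theorem lt_dist_of_rampedDepth_pos {V : Set X} {t c : ℝ} {x₀ x : X}
    (h : 0 < rampedDepth V t c x₀ x) : c * t < dist x x₀ := by
  have h' := h.trans_le (min_le_right _ _)
  rw [lt_max_iff] at h'
  rcases h' with h' | h'
  · exact absurd h' (lt_irrefl 0)
  · linarith

theorem rampedDepth_eq {V : Set X} {t c : ℝ} (ht : 0 ≤ t) {x₀ x : X} (hV : closedBall x t ⊆ V)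
    (hx : (c + 1) * t ≤ dist x x₀) : rampedDepth V t c x₀ x = t := by
  rw [rampedDepth, depth_eq_of_closedBall_subset ht hV, min_eq_left]
  exact le_max_of_le_right (by linarith)

theorem lipschitzWith_rampedDepth (V : Set X) (t c : ℝ) (x₀ : X) :
    LipschitzWith 1 (rampedDepth V t c x₀) := by
  have hramp : LipschitzWith 1 fun x => max 0 (dist x x₀ - c * t) :=
    (LipschitzWith.of_le_add fun x y => by linarith [dist_triangle x y x₀]).const_max 0
  have h := (lipschitzWith_depth V t).min hramp
  rwa [max_self] at h

end Depth

section Scales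

variable {ρ : ℝ}

theorem exists_zpow_mem_Icc (hρ : 1 < ρ) {a : ℝ} (ha : 0 < a) : ∃ n : ℤ, a ≤ ρ ^ n ∧ ρ ^ n ≤ ρ * a := by
  obtain ⟨n, hn, hn'⟩ := exists_mem_Ioc_zpow ha hρ
  refine ⟨n + 1, hn', ?_⟩
  rw [zpow_add_one₀ (by positivity), mul_comm]
  exact mul_le_mul_of_nonneg_left hn.le (by positivity)

theorem finite_setOf_zpow_mem_Icc (hρ : 1 < ρ) {a : ℝ} (ha : 0 < a) (M : ℝ) :
    {n : ℤ | a ≤ ρ ^ n ∧ ρ ^ n ≤ M}.Finite := by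
  obtain ⟨m, hm, -⟩ := exists_mem_Ioc_zpow ha hρ
  obtain ⟨k, hk⟩ := pow_unbounded_of_one_lt M hρ
  rw [← zpow_natCast] at hk
  exact (finite_Icc m k).subset fun n hn => mem_Icc.2
    ⟨((zpow_lt_zpow_iff_right₀ hρ).1 (hm.trans_le hn.1)).le,
      ((zpow_lt_zpow_iff_right₀ hρ).1 (hn.2.trans_lt hk)).le⟩

end Scales

section CoverIndex

variable {X : Type*} {U : ℤ → Set (Set X)} {S : Set X}

/-- When `S` is dense these are all members with nonempty interior, the only ones that carry a
nonzero coordinate. -/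
def coverIndex (U : ℤ → Set (Set X)) (S : Set X) : Set (ℤ × Set X) :=
  {p | p.2 ∈ U p.1 ∧ (p.2 ∩ S).Nonempty}

theorem mk_coverIndex_le (hU : ∀ n, PointFinite (U n)) (hS : ℵ₀ ≤ #S) :
    #(coverIndex U S) ≤ #S := by
  have hsub : coverIndex U S ⊆ ⋃ q : ℤ × S, Prod.mk q.1 '' {V | V ∈ U q.1 ∧ (q.2 : X) ∈ V} := by
    rintro ⟨n, V⟩ ⟨hV, s, hsV, hsS⟩
    exact mem_iUnion.2 ⟨(n, ⟨s, hsS⟩), V, ⟨hV, hsV⟩, rfl⟩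
  calc #(coverIndex U S)
      ≤ #(ℤ × S) * ⨆ q : ℤ × S, #(Prod.mk q.1 '' {V | V ∈ U q.1 ∧ (q.2 : X) ∈ V}) :=
        (Cardinal.mk_le_mk_of_subset hsub).trans (Cardinal.mk_iUnion_le _)
    _ ≤ #S * ℵ₀ := by
        gcongr
        · simp [Cardinal.mk_prod, Cardinal.aleph0_mul_eq hS]
        · exact ciSup_le' fun q =>
            Cardinal.le_aleph0_iff_set_countable.2 (((hU q.1) q.2).image _).countable
    _ = #S := Cardinal.mul_aleph0_eq hS

variable [PseudoMetricSpace X]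

theorem finite_setOf_le_rampedDepth (hU : ∀ n, PointFinite (U n)) {ρ c : ℝ} (hρ : 1 < ρ)
    (hc : 0 < c) (x₀ x : X) {ε : ℝ} (hε : 0 < ε) :
    {p : ℤ × Set X | p.2 ∈ U p.1 ∧ ε ≤ rampedDepth p.2 (ρ ^ p.1) c x₀ x}.Finite := by
  set N := {n : ℤ | ε ≤ ρ ^ n ∧ ρ ^ n ≤ dist x x₀ / c}
  have hN : N.Finite := finite_setOf_zpow_mem_Icc hρ hε _
  refine (hN.prod (hN.biUnion fun n _ => hU n x)).subset ?_
  rintro ⟨n, V⟩ ⟨hV, hεV⟩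
  have hpos : 0 < rampedDepth V (ρ ^ n) c x₀ x := hε.trans_le hεV
  have hn : n ∈ N :=
    ⟨hεV.trans (rampedDepth_le V (by positivity) c x₀ x),
      (le_div_iff₀' hc).2 (lt_dist_of_rampedDepth_pos hpos).le⟩
  have hxV : x ∈ V := by
    by_contra hxV
    exact hpos.ne' (rampedDepth_eq_zero_of_notMem _ c x₀ hxV)
  exact ⟨hn, mem_biUnion hn ⟨hV, hxV⟩⟩

/-- The separating coordinate lives at the scale `ρ ^ n ≈ (d - L) / K`: the member containing the
ball of that radius around `p` is too small to contain `q`. -/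
theorem exists_mem_coverIndex_sub_le_rampedDepth (hS : Dense S) {ρ A D K L c : ℝ} (hρ : 1 < ρ)
    (hdeep : ∀ n x, ∃ V ∈ U n, closedBall x (ρ ^ n) ⊆ V)
    (hsmall : ∀ n, ∀ V ∈ U n, ∀ y ∈ V, ∀ z ∈ V, dist y z ≤ A * ρ ^ n + D)
    (hA : 0 ≤ A) (hAK : A * ρ < K) (hcK : 2 * (c + 1) * ρ ≤ K) (hDL : D ≤ L) (hL : 0 ≤ L)
    (x₀ : X) {p q : X} (hpq : L < dist p q) (hp : dist p q ≤ 2 * dist p x₀) :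
    ∃ j ∈ coverIndex U S, dist p q - L ≤ K * rampedDepth j.2 (ρ ^ j.1) c x₀ p ∧
      rampedDepth j.2 (ρ ^ j.1) c x₀ q = 0 := by
  have hK : 0 < K := (mul_nonneg hA (by linarith)).trans_lt hAK
  obtain ⟨n, hn₁, hn₂⟩ := exists_zpow_mem_Icc hρ (div_pos (sub_pos.2 hpq) hK)
  set τ := ρ ^ n
  have hτ : 0 < τ := by positivity
  have hlow : dist p q - L ≤ K * τ := (div_le_iff₀' hK).1 hn₁
  have hhigh : K * τ ≤ ρ * (dist p q - L) := by
    rw [← mul_div_assoc, le_div_iff₀' hK] at hn₂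
    linarith
  obtain ⟨V, hV, hball⟩ := hdeep n p
  have hVS : (V ∩ S).Nonempty := by
    obtain ⟨s, hsS, hs⟩ := hS.exists_mem_open isOpen_ball ⟨p, mem_ball_self hτ⟩
    exact ⟨s, hball (ball_subset_closedBall hs), hsS⟩
  have hqV : q ∉ V := by
    intro hqV
    have hpq' := hsmall n V hV p (hball (mem_closedBall_self hτ.le)) q hqV
    have : A * τ * ρ < ρ * (dist p q - L) := by nlinarith
    nlinarith
  have hfar : (c + 1) * τ ≤ dist p x₀ := by nlinarith
  exact ⟨(n, V), ⟨hV, hVS⟩, by rwa [rampedDepth_eq hτ.le hball hfar],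
    rampedDepth_eq_zero_of_notMem _ c x₀ hqV⟩

end CoverIndex

theorem exists_c0Pos_embedding_of_covers {X ι : Type u} [MetricSpace X] (hι : #ι = densChar X)
    {A D L : ℝ} {K : ℝ≥0} (hA : 2 ≤ A) (hAK : A < K) (hDL : D ≤ L) (hL : 0 ≤ L)
    (hcov : ∀ τ : ℝ, 0 < τ → ∃ U : Set (Set X), PointFinite U ∧
      (∀ x, ∃ V ∈ U, closedBall x τ ⊆ V) ∧ ∀ V ∈ U, ∀ y ∈ V, ∀ z ∈ V, dist y z ≤ A * τ + D) :
    ∃ f : X → c0Pos ι, ∀ x y, dist x y - L ≤ dist (f x) (f y) ∧ dist (f x) (f y) ≤ K * dist x y := by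
  obtain ⟨S, hS, hSι⟩ := exists_dense_mk_eq_densChar X
  rw [← hSι] at hι
  rcases lt_or_ge #S ℵ₀ with hfin | hinf
  · -- a finite dense set is everything, and a finite space embeds isometrically
    have hSuniv : S = univ := by
      rw [← hS.closure_eq, (Cardinal.lt_aleph0_iff_set_finite.1 hfin).isClosed.closure_eq]
    have : Finite X := by
      rw [← Set.finite_univ_iff, ← hSuniv]
      exact Cardinal.lt_aleph0_iff_set_finite.1 hfin
    obtain ⟨e⟩ := (Cardinal.le_def X ι).1 (by rw [hι, hSuniv, Cardinal.mk_univ])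
    obtain ⟨f, hf⟩ := exists_map_c0Pos_dist_eq_of_finite e
    refine ⟨f, fun x y => ⟨by linarith [hf x y], (hf x y).le.trans ?_⟩⟩
    exact le_mul_of_one_le_left dist_nonneg (by linarith)
  obtain ⟨x₀, -⟩ := (Set.infinite_coe_iff.1 (Cardinal.infinite_iff.2 hinf)).nonempty
  have hA0 : 0 < A := by linarith
  obtain ⟨ρ, hρ, hρK⟩ := exists_between ((one_lt_div hA0).2 hAK)
  have hAρ : A * ρ < K := by rwa [lt_div_iff₀' hA0] at hρK
  choose U hPF hdeep hsmall using fun n : ℤ => hcov (ρ ^ n) (by positivity)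
  obtain ⟨e⟩ := (Cardinal.le_def (coverIndex U S) ι).1 (hι ▸ mk_coverIndex_le hPF hinf)
  obtain ⟨c, hc_def⟩ : ∃ c : ℝ, c = K / (2 * ρ) - 1 := ⟨_, rfl⟩
  have hc : 0 < c := by
    rw [hc_def, sub_pos, one_lt_div (by positivity)]
    nlinarith
  have hcK : 2 * (c + 1) * ρ ≤ K := le_of_eq (by rw [hc_def, sub_add_cancel]; field_simp)
  set F : coverIndex U S → X → ℝ := fun j x => K * rampedDepth j.1.2 (ρ ^ j.1.1) c x₀ x
  have hFfin : ∀ x, ∀ ε > 0, {j | ε ≤ F j x}.Finite := fun x ε hε =>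
    (finite_setOf_le_rampedDepth hPF hρ hc x₀ x (div_pos hε (hA0.trans hAK))).preimage
      Subtype.val_injective.injOn |>.subset fun j hj => ⟨j.2.1, (div_le_iff₀' (hA0.trans hAK)).2 hj⟩
  obtain ⟨f, hfK, hfF⟩ := exists_map_c0Pos_of_coordinates e F
    (fun j x => mul_nonneg K.coe_nonneg (rampedDepth_nonneg _ _ _ _ _)) hFfin
    (fun j => by simpa [F, Function.comp_def] using (lipschitzWith_smul (K : ℝ)).comp (lipschitzWith_rampedDepth j.1.2 (ρ ^ j.1.1) c x₀))
  have hsep : ∀ p q, dist p q ≤ 2 * dist p x₀ → dist p q - L ≤ dist (f p) (f q) := by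
    intro p q hp
    rcases le_or_gt (dist p q) L with hpq | hpq
    · linarith [dist_nonneg (x := f p) (y := f q)]
    obtain ⟨j, hj, hjp, hjq⟩ := exists_mem_coverIndex_sub_le_rampedDepth hS hρ hdeep hsmall
      hA0.le hAρ hcK hDL hL x₀ hpq hp
    calc dist p q - L ≤ dist (F ⟨j, hj⟩ p) (F ⟨j, hj⟩ q) := by
          simpa [F, hjq, Real.dist_eq, abs_of_nonneg, rampedDepth_nonneg] using hjp
      _ ≤ dist (f p) (f q) := hfF _ p q
  refine ⟨f, fun x y => ⟨?_, hfK x y⟩⟩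
  rcases le_total (dist y x₀) (dist x x₀) with h | h
  · exact hsep x y (by linarith [dist_triangle_right x y x₀])
  · rw [dist_comm x y, dist_comm (f x)]
    exact hsep y x (by linarith [dist_triangle_right y x x₀])

theorem exists_c0Pos_embedding_of_Δc_le {X ι : Type u} [MetricSpace X] {C D : ℝ≥0} (hC : 1 ≤ C)
    (h : ∀ R : ℝ≥0, Δc X R ≤ ((C * R + D : ℝ≥0) : ℝ≥0∞)) (hι : #ι = densChar X) {K : ℝ≥0}
    {L : ℝ} (hK : 2 * (C : ℝ) < K) (hL : (D : ℝ) ≤ L) :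
    ∃ f : X → c0Pos ι, ∀ x y, dist x y - L ≤ dist (f x) (f y) ∧ dist (f x) (f y) ≤ K * dist x y := by
  obtain ⟨A, hCA, hAK⟩ := exists_between hK
  have hC' : (1 : ℝ) ≤ C := by exact_mod_cast hC
  exact exists_c0Pos_embedding_of_covers hι (by linarith) hAK hL (D.coe_nonneg.trans hL)
    fun τ hτ => exists_pointFinite_cover_of_Δc_le h hCA hτ

theorem stmt17 {X : Type u} [MetricSpace X] (C D : ℝ≥0) (hC : 1 ≤ C)
    (h : ∀ R : ℝ≥0, Δc X R ≤ ((C * R + D : ℝ≥0) : ℝ≥0∞))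
    (ι : Type u) (hι : Cardinal.mk ι = densChar X)
    (lam K L : ℝ) (hlam : 0 < lam) (hK : 2 * ((C : ℝ) + lam) < K)
    (hL : ((C : ℝ) + lam) * (D : ℝ) / lam < L) :
    (∃ f : X → c0Pos ι,
      ∀ x y : X, dist x y - L ≤ dist (f x) (f y) ∧ dist (f x) (f y) ≤ K * dist x y) ∧
    (D = 0 → ∃ f : X → c0Pos ι,
      ∀ x y : X, dist x y ≤ dist (f x) (f y) ∧ dist (f x) (f y) ≤ K * dist x y) := by
  have hK' : 2 * (C : ℝ) < K := by linarith
  have hDL : (D : ℝ) ≤ L := by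
    refine le_of_lt (lt_of_le_of_lt ?_ hL)
    rw [le_div_iff₀ hlam]
    nlinarith [C.coe_nonneg, D.coe_nonneg]
  lift K to ℝ≥0 using by linarith [C.coe_nonneg]
  refine ⟨exists_c0Pos_embedding_of_Δc_le hC h hι hK' hDL, fun hD => ?_⟩
  obtain ⟨f, hf⟩ := exists_c0Pos_embedding_of_Δc_le hC h hι hK' (L := 0) (by simp [hD])
  exact ⟨f, fun x y => by simpa using hf x y⟩
end
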